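/- arXiv:1410.5862 — 5 statements merged into one kernel-verified Lean document; each statement's English description precedes it below -/
import Mathlib

section
/- Let ω = e^{2πi/3} and let z = (z₁, z₂, z₃) ∈ ℂ³ be a unit vector. Let z⁽¹⁾ = (z₁, ω z₂, ω² z₃). Then |⟨z, z⁽¹⁾⟩|² = 1/4 if and only if |z₁|⁴ + |z₂|⁴ + |z₃|⁴ = 1/2, where ⟨w, v⟩ = Σᵢ conj(wᵢ)·vᵢ. -/
/-!
With `a, b, c = |z₁|², |z₂|², |z₃|²` the inner product is `a + b ω + c ω²`. Since `ω̄ = ω²` and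
`1 + ω + ω² = 0`, its squared norm is `a² + b² + c² - ab - bc - ca = (3 (a² + b² + c²) - (a + b + c)²) / 2`,
and `a + b + c = 1`.
-/

open Complex ComplexConjugate

lemma conj_mul_mul_self (w z : ℂ) : conj z * (w * z) = (‖z‖ ^ 2 : ℝ) * w := by
  rw [mul_left_comm, conj_mul', mul_comm, ofReal_pow]

lemma IsPrimitiveRoot.conj_eq_sq {ω : ℂ} (hω : IsPrimitiveRoot ω 3) : conj ω = ω ^ 2 := by
  rw [← inv_eq_conj (hω.norm'_eq_one three_ne_zero), inv_eq_of_mul_eq_one_right]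
  rw [← pow_succ', hω.pow_eq_one]

lemma IsPrimitiveRoot.norm_add_mul_add_mul_sq_sq {ω : ℂ} (hω : IsPrimitiveRoot ω 3)
    (a b c : ℝ) :
    ‖(a : ℂ) + b * ω + c * ω ^ 2‖ ^ 2 = a ^ 2 + b ^ 2 + c ^ 2 - a * b - b * c - c * a := by
  have hcube : ω ^ 3 = 1 := hω.pow_eq_one
  have hsum : 1 + ω + ω ^ 2 = 0 := by
    simpa [Finset.sum_range_succ] using hω.geom_sum_eq_zero (by norm_num)
  apply ofReal_injective
  rw [ofReal_pow, ← mul_conj']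
  simp only [map_add, map_mul, map_pow, conj_ofReal, hω.conj_eq_sq]
  push_cast
  linear_combination (a * b + c * a + b * c) * hsum
    + (c * a * ω + b * c * (ω ^ 2 + ω) + b ^ 2 + c ^ 2 * (ω ^ 3 + 1)) * hcube

lemma sq_sub_mul_eq_quarter_iff {a b c : ℝ} (h : a + b + c = 1) :
    a ^ 2 + b ^ 2 + c ^ 2 - a * b - b * c - c * a = 1 / 4 ↔ a ^ 2 + b ^ 2 + c ^ 2 = 1 / 2 := by
  have key : a ^ 2 + b ^ 2 + c ^ 2 - a * b - b * c - c * a =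
      (3 * (a ^ 2 + b ^ 2 + c ^ 2) - 1) / 2 := by
    linear_combination (-(a + b + c + 1) / 2) * h
  rw [key]
  constructor <;> intro h' <;> linarith

theorem stmt_5 (ω : ℂ) (hω : ω = Complex.exp (2 * Real.pi * Complex.I / 3))
    (z : Fin 3 → ℂ)
    (hz : ‖z 0‖ ^ 2 + ‖z 1‖ ^ 2 + ‖z 2‖ ^ 2 = 1) :
    ‖(starRingEnd ℂ) (z 0) * (z 0) + (starRingEnd ℂ) (z 1) * (ω * z 1) +
        (starRingEnd ℂ) (z 2) * (ω ^ 2 * z 2)‖ ^ 2 = 1 / 4 ↔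
      ‖z 0‖ ^ 4 + ‖z 1‖ ^ 4 + ‖z 2‖ ^ 4 = 1 / 2 := by
  have hprim : IsPrimitiveRoot ω 3 := by
    simpa [hω] using isPrimitiveRoot_exp 3 three_ne_zero
  rw [conj_mul', conj_mul_mul_self, conj_mul_mul_self, ← ofReal_pow,
    hprim.norm_add_mul_add_mul_sq_sq]
  simp only [show ∀ x : ℝ, x ^ 4 = (x ^ 2) ^ 2 from fun x => by ring]
  exact sq_sub_mul_eq_quarter_iff hz
end

section
/- Let ω = e^{2πi/3}. The nine vectors in ℂ³ obtained from (0, 1, 1) by applying all combinations of the cyclic shift (z₁,z₂,z₃) ↦ (z₃,z₁,z₂) and the phase map (z₁,z₂,z₃) ↦ (z₁, ω z₂, ω² z₃) define nine points of ℂP², any two distinct of which satisfy |⟨w, z⟩|²/(‖w‖²‖z‖²) = 1/4. -/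
/-!
Write `v j k i = ψ (k * i) * e (i + j)` with `e = (0, 1, 1)` and `ψ a = ω ^ a` the additive
character of `ℤ/3`. Substituting `i ↦ i - j` (Weyl–Heisenberg covariance) turns
`⟨v j k, v j' k'⟩` into a unimodular multiple of `⟨v 0 0, v (j' - j) (k' - k)⟩`. For each of the
eight nonzero shifts this overlap is either a single power of `ω` or `ω + ω² = -1`, so it has
modulus `1`; every `v j k` has two unimodular entries and one zero, so `‖v j k‖² = 2`.
-/

/-- The orbit of the vector `(0,1,1)` under the Weyl–Heisenberg group:
`v j k` is obtained by applying the cyclic shift `j` times and the phase map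
`(z₁,z₂,z₃) ↦ (z₁, ω z₂, ω² z₃)` `k` times. -/
noncomputable def WHorbit (ω : ℂ) (j k : Fin 3) : Fin 3 → ℂ :=
  fun i => ω ^ ((k : ℕ) * (i : ℕ)) * (![0, 1, 1] : Fin 3 → ℂ) (i + j)

open Finset ComplexConjugate

section
variable {n : ℕ} [NeZero n] {ζ : ℂ}

def finPowChar (hζ : ζ ^ n = 1) : AddChar (Fin n) ℂ where
  toFun a := ζ ^ (a : ℕ)
  map_zero_eq_one' := by simp
  map_add_eq_mul' a b := by rw [Fin.val_add, ← pow_eq_pow_mod _ hζ, pow_add]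

lemma finPowChar_apply (hζ : ζ ^ n = 1) (a : Fin n) : finPowChar hζ a = ζ ^ (a : ℕ) := rfl

lemma pow_val_mul_val_eq_finPowChar (hζ : ζ ^ n = 1) (a b : Fin n) :
    ζ ^ ((a : ℕ) * b) = finPowChar hζ (a * b) := by
  rw [finPowChar_apply, Fin.val_mul, ← pow_eq_pow_mod _ hζ]

end

variable {ω : ℂ}

lemma WHorbit_apply_eq_finPowChar_mul (hω : ω ^ 3 = 1) (j k i : Fin 3) :
    WHorbit ω j k i = finPowChar hω (k * i) * (![0, 1, 1] : Fin 3 → ℂ) (i + j) := by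
  rw [WHorbit, pow_val_mul_val_eq_finPowChar hω]

lemma sum_conj_WHorbit_mul_WHorbit (hω : ω ^ 3 = 1) (j k j' k' : Fin 3) :
    ∑ i, conj (WHorbit ω j k i) * WHorbit ω j' k' i =
      finPowChar hω (-((k' - k) * j)) *
        ∑ i, conj (WHorbit ω 0 0 i) * WHorbit ω (j' - j) (k' - k) i := by
  rw [← Equiv.sum_comp (Equiv.subRight j), mul_sum]
  refine sum_congr rfl fun i _ => ?_
  have hconj (x : Fin 3) : conj ((![0, 1, 1] : Fin 3 → ℂ) x) = ![0, 1, 1] x := by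
    fin_cases x <;> simp
  simp only [Equiv.subRight_apply, WHorbit_apply_eq_finPowChar_mul hω, map_mul, hconj, zero_mul,
    AddChar.map_zero_eq_one, map_one, add_zero, ← AddChar.map_neg_eq_conj, sub_add_cancel]
  have hphase : finPowChar hω (-(k * (i - j))) * finPowChar hω (k' * (i - j)) =
      finPowChar hω (-((k' - k) * j)) * finPowChar hω ((k' - k) * i) := by
    have hexp : -(k * (i - j)) + k' * (i - j) = -((k' - k) * j) + (k' - k) * i := by
      open Fin.CommRing in ring
    rw [← AddChar.map_add_eq_mul, ← AddChar.map_add_eq_mul, hexp]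
  rw [show i - j + j' = i + (j' - j) by abel]
  linear_combination ((![0, 1, 1] : Fin 3 → ℂ) i * ![0, 1, 1] (i + (j' - j))) * hphase

lemma IsPrimitiveRoot.add_sq_eq_neg_one (hω : IsPrimitiveRoot ω 3) : ω + ω ^ 2 = -1 := by
  have := hω.geom_sum_eq_zero (by norm_num)
  simp only [sum_range_succ, range_one, sum_singleton, pow_zero, pow_one] at this
  linear_combination this

lemma norm_sum_conj_WHorbit_zero_zero_mul (hω : IsPrimitiveRoot ω 3) {s d : Fin 3}
    (hsd : (s, d) ≠ (0, 0)) : ‖∑ i, conj (WHorbit ω 0 0 i) * WHorbit ω s d i‖ = 1 := by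
  have hnorm : ‖ω‖ = 1 := hω.norm'_eq_one (by norm_num)
  have hsum := hω.add_sq_eq_neg_one
  have h4 : ω ^ 4 = ω := by rw [pow_succ, hω.pow_eq_one, one_mul]
  fin_cases s <;> fin_cases d
  · exact absurd rfl hsd
  all_goals simp [WHorbit, Fin.sum_univ_three, hnorm, h4, hsum, add_comm (ω ^ 2) ω]

lemma sum_norm_WHorbit_sq (hω : ‖ω‖ = 1) (j k : Fin 3) : ∑ i, ‖WHorbit ω j k i‖ ^ 2 = 2 := by
  simp only [WHorbit, norm_mul, norm_pow, hω, one_pow, one_mul]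
  rw [← Equiv.sum_comp (Equiv.subRight j)]
  simp [Fin.sum_univ_three]
  norm_num

lemma norm_sum_conj_WHorbit_mul_WHorbit (hω : IsPrimitiveRoot ω 3) {j k j' k' : Fin 3}
    (hne : (j, k) ≠ (j', k')) :
    ‖∑ i, conj (WHorbit ω j k i) * WHorbit ω j' k' i‖ = 1 := by
  rw [sum_conj_WHorbit_mul_WHorbit hω.pow_eq_one, norm_mul, AddChar.norm_apply, one_mul]
  refine norm_sum_conj_WHorbit_zero_zero_mul hω fun h => hne ?_
  simp only [Prod.mk.injEq, sub_eq_zero] at h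
  rw [h.1, h.2]

theorem stmt_8 (ω : ℂ) (hω : ω = Complex.exp (2 * Real.pi * Complex.I / 3))
    (j k j' k' : Fin 3) (hne : (j, k) ≠ (j', k')) :
    ‖∑ i : Fin 3,
        (starRingEnd ℂ) (WHorbit ω j k i) * WHorbit ω j' k' i‖ ^ 2 /
      ((∑ i : Fin 3, ‖WHorbit ω j k i‖ ^ 2) *
        (∑ i : Fin 3, ‖WHorbit ω j' k' i‖ ^ 2)) = 1 / 4 := by
  have hprim : IsPrimitiveRoot ω 3 := hω ▸ Complex.isPrimitiveRoot_exp 3 (by norm_num)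
  have hnorm : ‖ω‖ = 1 := hprim.norm'_eq_one (by norm_num)
  rw [norm_sum_conj_WHorbit_mul_WHorbit hprim hne, sum_norm_WHorbit_sq hnorm,
    sum_norm_WHorbit_sq hnorm]
  norm_num
end

section
/- Let ω = e^{2πi/3} and z₁ = (0,1,-ω)/√2, z₂ = (0,1,-ω²)/√2. If z = (a, 1, c) with a ∈ ℂ, c ∈ ℝ, and |⟨z, zⱼ⟩|² = (1/4)·‖z‖² for j = 1, 2, then |a|⁴ + 1 + c⁴ = (1/2)·(|a|² + 1 + c²)²; i.e., the normalized point (|a|², 1, c²)/‖z‖² lies on the sphere x₁²+x₂²+x₃² = 1/2. -/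
/-!
Since `Re ω = -1/2` and `|ω| = 1`, we get `⟨z, z₁⟩ = (1 - cω)/√2` and `|1 - cω|² = 1 + c + c²`,
so `|⟨z, z₁⟩|² = ‖z‖²/4` says exactly `|a|² = (1 + c)²`. Substituting, both sides of the
claim equal `2 (1 + c + c²)²`.
-/

open Complex

lemma Complex.exp_two_pi_I_div_three_re : (exp (2 * Real.pi * I / 3)).re = -1 / 2 := by
  have h : 2 * Real.pi * I / 3 = ((Real.pi - Real.pi / 3 : ℝ) : ℂ) * I := by push_cast; ring
  rw [h, exp_ofReal_mul_I_re, Real.cos_pi_sub, Real.cos_pi_div_three]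
  norm_num

lemma Complex.normSq_exp_two_pi_I_div_three : normSq (exp (2 * Real.pi * I / 3)) = 1 := by
  have h : 2 * Real.pi * I / 3 = ((2 * Real.pi / 3 : ℝ) : ℂ) * I := by push_cast; ring
  rw [h, normSq_eq_norm_sq, norm_exp_ofReal_mul_I, one_pow]

lemma Complex.normSq_one_sub_ofReal_mul (c : ℝ) (w : ℂ) :
    normSq (1 - c * w) = 1 - 2 * c * w.re + c ^ 2 * normSq w := by
  rw [normSq_sub, normSq_one, normSq_mul, normSq_ofReal, map_mul, conj_ofReal]
  simp only [one_mul, re_ofReal_mul, conj_re]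
  ring

lemma sum_conj_mul_eq_one_sub_mul_div_sqrt_two (a w : ℂ) (c : ℝ) :
    ∑ i : Fin 3, starRingEnd ℂ (![a, 1, (c : ℂ)] i) *
        ![0, (1 / Real.sqrt 2 : ℂ), -w / Real.sqrt 2] i = (1 - c * w) / Real.sqrt 2 := by
  simp only [Fin.sum_univ_three, Matrix.cons_val_zero, Matrix.cons_val_one, Matrix.cons_val_two,
    Matrix.head_cons, Matrix.tail_cons, map_one, conj_ofReal]
  ring

lemma norm_div_sqrt_two_sq (z : ℂ) : ‖z / Real.sqrt 2‖ ^ 2 = normSq z / 2 := by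
  rw [norm_div, div_pow, norm_real, Real.norm_eq_abs, sq_abs, Real.sq_sqrt zero_le_two,
    Complex.sq_norm]

theorem stmt_11_general (ω : ℂ) (hω : ω = Complex.exp (2 * Real.pi * Complex.I / 3))
    (z₁ : Fin 3 → ℂ)
    (hz₁ : z₁ = ![0, (1 / Real.sqrt 2 : ℂ), -ω / Real.sqrt 2])
    (a : ℂ) (c : ℝ) (z : Fin 3 → ℂ) (hz : z = ![a, 1, (c : ℂ)])
    (h1 : ‖∑ i : Fin 3, (starRingEnd ℂ) (z i) * z₁ i‖ ^ 2 =
        (1 / 4) * (‖a‖ ^ 2 + 1 + c ^ 2)) :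
    ‖a‖ ^ 4 + 1 + c ^ 4 = (1 / 2) * (‖a‖ ^ 2 + 1 + c ^ 2) ^ 2 := by
  subst hz hz₁
  rw [sum_conj_mul_eq_one_sub_mul_div_sqrt_two, norm_div_sqrt_two_sq,
    normSq_one_sub_ofReal_mul, hω, exp_two_pi_I_div_three_re, normSq_exp_two_pi_I_div_three] at h1
  have ha : ‖a‖ ^ 2 = (1 + c) ^ 2 := by linarith
  -- the difference of the two sides is (‖a‖² - (1 + c)²) (‖a‖² - (1 - c)²) / 2
  linear_combination (‖a‖ ^ 2 - (1 - c) ^ 2) / 2 * ha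

theorem stmt_11 (ω : ℂ) (hω : ω = Complex.exp (2 * Real.pi * Complex.I / 3))
    (z₁ z₂ : Fin 3 → ℂ)
    (hz₁ : z₁ = ![0, (1 / Real.sqrt 2 : ℂ), -ω / Real.sqrt 2])
    (hz₂ : z₂ = ![0, (1 / Real.sqrt 2 : ℂ), -ω ^ 2 / Real.sqrt 2])
    (a : ℂ) (c : ℝ) (z : Fin 3 → ℂ) (hz : z = ![a, 1, (c : ℂ)])
    (h1 : ‖∑ i : Fin 3, (starRingEnd ℂ) (z i) * z₁ i‖ ^ 2 =
        (1 / 4) * (‖a‖ ^ 2 + 1 + c ^ 2))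
    (h2 : ‖∑ i : Fin 3, (starRingEnd ℂ) (z i) * z₂ i‖ ^ 2 =
        (1 / 4) * (‖a‖ ^ 2 + 1 + c ^ 2)) :
    ‖a‖ ^ 4 + 1 + c ^ 4 = (1 / 2) * (‖a‖ ^ 2 + 1 + c ^ 2) ^ 2 :=
  stmt_11_general ω hω z₁ hz₁ a c z hz h1
end

section
/- Define z(σ, φ) = √(2/3)·(e^{iσ}cos φ, cos(φ+2π/3), cos(φ+4π/3)). Suppose φ, ψ ∈ (-π/2, π/2) with φ, ψ ∉ {-π/6, π/6}, and cos φ·cos ψ + 3·sin φ·sin ψ ≠ 0. Then |⟨z(σ,φ), z(τ,ψ)⟩|² = 1/4 if and only if 1 - cos(σ - τ) = 9·(1 + 2cos(2(φ-ψ)))·sec φ·sec ψ / (16·(cos φ cos ψ + 3 sin φ sin ψ)). -/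
/-!
With `c = cos φ cos ψ` and `D = cos φ cos ψ + 3 sin φ sin ψ`, the two coordinates at the
equally spaced angles `φ + 2π/3`, `φ + 4π/3` contribute `D/2`, so
`⟨z(σ,φ), z(τ,ψ)⟩ = (2/3) (c e^{i(τ-σ)} + D/2)`. Since `2c + D = 3 cos(φ-ψ)`, its squared modulus
is `cos²(φ-ψ) - (4/9) c D (1 - cos(σ-τ))`, which is affine in `1 - cos(σ-τ)`; solving for it and
using `4 cos²(φ-ψ) - 1 = 1 + 2 cos 2(φ-ψ)` gives the formula.
-/

open Real

/-- The vector `z(σ,φ)` parametrizing the pinched torus over the incircle. -/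
noncomputable def zVec (σ φ : ℝ) : Fin 3 → ℂ :=
  ![Real.sqrt (2/3) * Complex.exp (σ * Complex.I) * Real.cos φ,
    Real.sqrt (2/3) * Real.cos (φ + 2 * π / 3),
    Real.sqrt (2/3) * Real.cos (φ + 4 * π / 3)]

open ComplexConjugate

theorem cos_add_two_pi_div_three_mul_add_cos_add_four_pi_div_three_mul (φ ψ : ℝ) :
    cos (φ + 2 * π / 3) * cos (ψ + 2 * π / 3) + cos (φ + 4 * π / 3) * cos (ψ + 4 * π / 3) =
      (cos φ * cos ψ + 3 * sin φ * sin ψ) / 2 := by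
  have h2 : cos (2 * π / 3) = -(1 / 2) ∧ sin (2 * π / 3) = √3 / 2 := by
    rw [show 2 * π / 3 = π - π / 3 by ring, cos_pi_sub, sin_pi_sub, cos_pi_div_three,
      sin_pi_div_three]
    exact ⟨rfl, rfl⟩
  have h4 : cos (4 * π / 3) = -(1 / 2) ∧ sin (4 * π / 3) = -(√3 / 2) := by
    rw [show 4 * π / 3 = π / 3 + π by ring, cos_add_pi, sin_add_pi, cos_pi_div_three,
      sin_pi_div_three]
    exact ⟨rfl, rfl⟩
  simp only [cos_add, h2, h4]
  linear_combination (sin φ * sin ψ / 2) * Real.sq_sqrt (show (0 : ℝ) ≤ 3 by norm_num)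

theorem inner_zVec (σ τ φ ψ : ℝ) :
    ∑ i : Fin 3, conj (zVec σ φ i) * zVec τ ψ i =
      (2 / 3 : ℂ) * (↑(cos φ * cos ψ) * Complex.exp (↑(τ - σ) * Complex.I) +
        ↑((cos φ * cos ψ + 3 * sin φ * sin ψ) / 2)) := by
  have hsqrt : ((√(2 / 3) : ℝ) : ℂ) ^ 2 = 2 / 3 := by
    rw [← Complex.ofReal_pow, Real.sq_sqrt (by norm_num)]; push_cast; ring
  have hexp : conj (Complex.exp (σ * Complex.I)) * Complex.exp (τ * Complex.I) =
      Complex.exp (↑(τ - σ) * Complex.I) := by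
    rw [← Complex.exp_conj, map_mul, Complex.conj_ofReal, Complex.conj_I, ← Complex.exp_add]
    push_cast; ring_nf
  rw [← cos_add_two_pi_div_three_mul_add_cos_add_four_pi_div_three_mul, ← hexp]
  simp only [zVec, Fin.sum_univ_three, Matrix.cons_val_zero, Matrix.cons_val_one,
    Matrix.cons_val_two, Matrix.head_cons, Matrix.tail_cons, map_mul, Complex.conj_ofReal,
    Complex.ofReal_mul, Complex.ofReal_add]
  linear_combination (conj (Complex.exp (σ * Complex.I)) * Complex.exp (τ * Complex.I) *
      cos φ * cos ψ + cos (φ + 2 * π / 3) * cos (ψ + 2 * π / 3) +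
      cos (φ + 4 * π / 3) * cos (ψ + 4 * π / 3)) * hsqrt

theorem norm_mul_exp_mul_I_add_sq (a b θ : ℝ) :
    ‖a * Complex.exp (θ * Complex.I) + b‖ ^ 2 = a ^ 2 + b ^ 2 + 2 * a * b * cos θ := by
  rw [Complex.sq_norm, Complex.normSq_apply]
  simp only [Complex.add_re, Complex.mul_re, Complex.ofReal_re, Complex.exp_ofReal_mul_I_re,
    Complex.ofReal_im, Complex.exp_ofReal_mul_I_im, zero_mul, sub_zero, Complex.add_im,
    Complex.mul_im, add_zero]
  linear_combination a ^ 2 * sin_sq_add_cos_sq θ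

theorem sq_norm_inner_zVec (σ τ φ ψ : ℝ) :
    ‖∑ i : Fin 3, conj (zVec σ φ i) * zVec τ ψ i‖ ^ 2 =
      cos (φ - ψ) ^ 2 - 4 / 9 * (cos φ * cos ψ) * (cos φ * cos ψ + 3 * sin φ * sin ψ) *
        (1 - cos (σ - τ)) := by
  rw [inner_zVec, norm_mul, mul_pow, norm_mul_exp_mul_I_add_sq,
    ← cos_neg (τ - σ), neg_sub, cos_sub φ ψ, show ‖(2 / 3 : ℂ)‖ = 2 / 3 by norm_num]
  ring

theorem stmt_14_general (σ τ φ ψ : ℝ)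
    (hφ : φ ∈ Set.Ioo (-(π/2)) (π/2)) (hψ : ψ ∈ Set.Ioo (-(π/2)) (π/2))
    (hden : cos φ * cos ψ + 3 * sin φ * sin ψ ≠ 0) :
    ‖∑ i : Fin 3, (starRingEnd ℂ) (zVec σ φ i) * zVec τ ψ i‖ ^ 2 = 1 / 4 ↔
      1 - cos (σ - τ) =
        9 * (1 + 2 * cos (2 * (φ - ψ))) * (1 / cos φ) * (1 / cos ψ) /
          (16 * (cos φ * cos ψ + 3 * sin φ * sin ψ)) := by
  have hcφ : cos φ ≠ 0 := (cos_pos_of_mem_Ioo hφ).ne'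
  have hcψ : cos ψ ≠ 0 := (cos_pos_of_mem_Ioo hψ).ne'
  rw [sq_norm_inner_zVec, cos_sq (φ - ψ), eq_div_iff (mul_ne_zero (by norm_num) hden)]
  field_simp
  constructor <;> intro h <;> linarith

theorem stmt_14 (σ τ φ ψ : ℝ)
    (hφ : φ ∈ Set.Ioo (-(π/2)) (π/2)) (hψ : ψ ∈ Set.Ioo (-(π/2)) (π/2))
    (hφ6 : φ ≠ -(π/6) ∧ φ ≠ π/6) (hψ6 : ψ ≠ -(π/6) ∧ ψ ≠ π/6)
    (hden : cos φ * cos ψ + 3 * sin φ * sin ψ ≠ 0) :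
    ‖∑ i : Fin 3, (starRingEnd ℂ) (zVec σ φ i) * zVec τ ψ i‖ ^ 2 = 1 / 4 ↔
      1 - cos (σ - τ) =
        9 * (1 + 2 * cos (2 * (φ - ψ))) * (1 / cos φ) * (1 / cos ψ) /
          (16 * (cos φ * cos ψ + 3 * sin φ * sin ψ)) :=
  stmt_14_general σ τ φ ψ hφ hψ hden
end

section
/- Suppose φ, ψ ∈ (-π/2, π/2), φ, ψ ∉ {-π/6, π/6}, and cos φ·cos ψ + 3·sin φ·sin ψ = 0 together with 1 + 2·cos(2(φ - ψ)) = 0. Then φ = -ψ and φ ∈ {π/6, -π/6}. (In particular, under the exclusions this situation cannot occur.) -/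
open Real

theorem stmt_15 (φ ψ : ℝ)
    (hφ : φ ∈ Set.Ioo (-(π/2)) (π/2)) (hψ : ψ ∈ Set.Ioo (-(π/2)) (π/2))
    (h1 : cos φ * cos ψ + 3 * sin φ * sin ψ = 0)
    (h2 : 1 + 2 * cos (2 * (φ - ψ)) = 0) :
    φ = -ψ ∧ (φ = π/6 ∨ φ = -(π/6)) := by
  obtain ⟨hφ1, hφ2⟩ := hφ
  obtain ⟨hψ1, hψ2⟩ := hψ
  have hπ := Real.pi_pos
  have hc2 : cos (2 * (φ - ψ)) = 2 * cos (φ - ψ) ^ 2 - 1 := Real.cos_two_mul _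
  have hcx : cos (φ - ψ) ^ 2 = 1/4 := by nlinarith
  have hsum : cos (φ + ψ) = 2 * cos (φ - ψ) := by
    rw [Real.cos_add, Real.cos_sub]; nlinarith
  -- cos (φ+ψ) > -1
  have hy : cos ((φ + ψ)/2) > 0 := by
    apply Real.cos_pos_of_mem_Ioo
    constructor <;> [linarith; linarith]
  have hgt : cos (φ + ψ) > -1 := by
    have : cos (2 * ((φ + ψ)/2)) = 2 * cos ((φ + ψ)/2) ^ 2 - 1 := Real.cos_two_mul _
    have h2e : (2 : ℝ) * ((φ + ψ)/2) = φ + ψ := by ring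
    rw [h2e] at this
    nlinarith
  have hcval : cos (φ - ψ) = 1/2 := by
    have hfac : (cos (φ - ψ) - 1/2) * (cos (φ - ψ) + 1/2) = 0 := by nlinarith
    rcases mul_eq_zero.mp hfac with h | h
    · linarith
    · exfalso; rw [hsum] at hgt; linarith
  have hsum1 : cos (φ + ψ) = 1 := by rw [hsum, hcval]; ring
  have hzero : φ + ψ = 0 := by
    have := (Real.cos_eq_one_iff_of_lt_of_lt (by linarith) (by linarith)).mp hsum1
    exact this
  have heq : φ = -ψ := by linarith
  refine ⟨heq, ?_⟩
  have h2φ : cos (2 * φ) = 1/2 := by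
    have : φ - ψ = 2 * φ := by linarith
    rw [← this]; exact hcval
  have habs : |2 * φ| = π/3 := by
    have hmem : |2 * φ| ∈ Set.Icc 0 π := ⟨abs_nonneg _, by
      rcases abs_cases (2 * φ) with ⟨h, _⟩ | ⟨h, _⟩ <;> rw [h] <;> linarith⟩
    have hmem' : π/3 ∈ Set.Icc (0:ℝ) π := ⟨by positivity, by linarith⟩
    have hca : cos |2 * φ| = 1/2 := by
      rcases abs_cases (2 * φ) with ⟨h, _⟩ | ⟨h, _⟩ <;> rw [h]
      · exact h2φ
      · rw [Real.cos_neg]; exact h2φ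
    apply Real.injOn_cos hmem hmem'
    rw [hca, Real.cos_pi_div_three]
  rcases abs_cases (2 * φ) with ⟨h, _⟩ | ⟨h, _⟩ <;> rw [h] at habs
  · left; linarith
  · right; linarith
end
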